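/- arXiv:2305.14134 — 3 statements merged into one kernel-verified Lean document; each statement's English description precedes it below -/
import Mathlib

section
/- Suppose u is of class C⁴ on the open set D and satisfies the elastic oscillation equation μ·Δu + (λ+μ)·grad(div u) + Λ·u = 0 at every point of D. Then the scalar function div u satisfies the Helmholtz equation Δ(div u) + ω₁·(div u) = 0 at every point of D, where ω₁ = Λ/(λ+2μ). -/
noncomputable section

/-- Partial derivative of a scalar function on `ℝ³` in the `i`-th coordinate direction. -/
def pd (i : Fin 3) (f : (Fin 3 → ℝ) → ℝ) : (Fin 3 → ℝ) → ℝ :=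
  fun x => fderiv ℝ f x (Pi.single i 1)

/-- Scalar Laplacian on `ℝ³`. -/
def lap (f : (Fin 3 → ℝ) → ℝ) : (Fin 3 → ℝ) → ℝ :=
  fun x => ∑ i : Fin 3, pd i (pd i f) x

/-- Componentwise (vector) Laplacian on `ℝ³`. -/
def vlap (v : (Fin 3 → ℝ) → (Fin 3 → ℝ)) : (Fin 3 → ℝ) → (Fin 3 → ℝ) :=
  fun x j => lap (fun y => v y j) x

/-- Divergence of a vector field on `ℝ³`. -/
def divg (v : (Fin 3 → ℝ) → (Fin 3 → ℝ)) : (Fin 3 → ℝ) → ℝ :=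
  fun x => ∑ i : Fin 3, pd i (fun y => v y i) x

/-- Gradient of a scalar function on `ℝ³`. -/
def grad (f : (Fin 3 → ℝ) → ℝ) : (Fin 3 → ℝ) → (Fin 3 → ℝ) :=
  fun x i => pd i f x

open Filter Topology

section PartialDerivatives

variable {f g : (Fin 3 → ℝ) → ℝ} {x : Fin 3 → ℝ} {m n : WithTop ℕ∞}

theorem pd_congr (i : Fin 3) (h : f =ᶠ[𝓝 x] g) : pd i f x = pd i g x := by
  simp only [pd, h.fderiv_eq]

theorem ContDiffAt.pd (i : Fin 3) (hf : ContDiffAt ℝ n f x) (hmn : m + 1 ≤ n) :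
    ContDiffAt ℝ m (pd i f) x :=
  (hf.fderiv_right hmn).clm_apply contDiffAt_const

theorem pd_const_mul (i : Fin 3) (c : ℝ) : pd i (fun y => c * f y) x = c * pd i f x := by
  simp only [pd]
  rw [show (fun y => c * f y) = c • f from rfl, fderiv_const_smul_field]
  rfl

theorem pd_add (i : Fin 3) (hf : DifferentiableAt ℝ f x) (hg : DifferentiableAt ℝ g x) :
    pd i (fun y => f y + g y) x = pd i f x + pd i g x := by
  simp [pd, fderiv_fun_add hf hg]

theorem pd_sum {ι : Type*} (s : Finset ι) (i : Fin 3) {F : ι → (Fin 3 → ℝ) → ℝ}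
    (hF : ∀ k ∈ s, DifferentiableAt ℝ (F k) x) :
    pd i (fun y => ∑ k ∈ s, F k y) x = ∑ k ∈ s, pd i (F k) x := by
  simp [pd, fderiv_fun_sum hF]

theorem pd_comm (i j : Fin 3) (hf : ContDiffAt ℝ 2 f x) :
    pd i (pd j f) x = pd j (pd i f) x := by
  have hd : DifferentiableAt ℝ (fderiv ℝ f) x :=
    (hf.fderiv_right (m := 1) le_rfl).differentiableAt one_ne_zero
  have hsnd : ∀ v w, fderiv ℝ (fun y => fderiv ℝ f y v) x w = fderiv ℝ (fderiv ℝ f) x w v :=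
    fun v w => by simp [fderiv_clm_apply hd (differentiableAt_const v)]
  unfold pd
  rw [hsnd, hsnd, hf.isSymmSndFDerivAt (by simp)]

theorem pd_lap_comm (j : Fin 3) (hf : ContDiffAt ℝ 3 f x) :
    pd j (lap f) x = lap (pd j f) x := by
  have hf2 : ∀ᶠ y in 𝓝 x, ContDiffAt ℝ 2 f y :=
    (hf.of_le (by norm_num)).eventually (by simp)
  have hpdpd : ∀ i, DifferentiableAt ℝ (pd i (pd i f)) x := fun i =>
    ((hf.pd i (m := 2) (by norm_num)).pd i (m := 1) (by norm_num)).differentiableAt one_ne_zero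
  calc pd j (lap f) x = ∑ i, pd j (pd i (pd i f)) x := pd_sum _ j fun i _ => hpdpd i
    _ = ∑ i, pd i (pd j (pd i f)) x :=
        Finset.sum_congr rfl fun i _ => pd_comm j i (hf.pd i (by norm_num))
    _ = ∑ i, pd i (pd i (pd j f)) x :=
        Finset.sum_congr rfl fun i _ => pd_congr i (hf2.mono fun y hy => pd_comm j i hy)
    _ = lap (pd j f) x := rfl

theorem ContDiffAt.lap (hf : ContDiffAt ℝ n f x) (hmn : m + 2 ≤ n) :
    ContDiffAt ℝ m (lap f) x :=
  ContDiffAt.sum fun i _ =>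
    (hf.pd i (m := m + 1) (by rwa [add_assoc, one_add_one_eq_two])).pd i le_rfl

theorem lap_sum {ι : Type*} (s : Finset ι) {F : ι → (Fin 3 → ℝ) → ℝ}
    (hF : ∀ k ∈ s, ContDiffAt ℝ 2 (F k) x) :
    lap (fun y => ∑ k ∈ s, F k y) x = ∑ k ∈ s, lap (F k) x := by
  have hF1 : ∀ᶠ y in 𝓝 x, ∀ k ∈ s, ContDiffAt ℝ 1 (F k) y :=
    (s.eventually_all).2 fun k hk => ((hF k hk).of_le (by norm_num)).eventually (by simp)
  have hpd : ∀ i, pd i (fun y => ∑ k ∈ s, F k y) =ᶠ[𝓝 x] fun y => ∑ k ∈ s, pd i (F k) y :=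
    fun i => hF1.mono fun y hy => pd_sum s i fun k hk => (hy k hk).differentiableAt one_ne_zero
  have hpdF : ∀ i, ∀ k ∈ s, DifferentiableAt ℝ (pd i (F k)) x := fun i k hk =>
    ((hF k hk).pd i (m := 1) (by norm_num)).differentiableAt one_ne_zero
  calc lap (fun y => ∑ k ∈ s, F k y) x = ∑ i, ∑ k ∈ s, pd i (pd i (F k)) x :=
        Finset.sum_congr rfl fun i _ => (pd_congr i (hpd i)).trans (pd_sum s i (hpdF i))
    _ = ∑ k ∈ s, lap (F k) x := Finset.sum_comm

end PartialDerivatives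

section VectorCalculus

variable {v w : (Fin 3 → ℝ) → (Fin 3 → ℝ)} {f : (Fin 3 → ℝ) → ℝ} {x : Fin 3 → ℝ}
  {m n : WithTop ℕ∞}

theorem ContDiffAt.divg (hv : ContDiffAt ℝ n v x) (hmn : m + 1 ≤ n) :
    ContDiffAt ℝ m (divg v) x :=
  ContDiffAt.sum fun i _ => (contDiffAt_pi.1 hv i).pd i hmn

theorem ContDiffAt.grad (hf : ContDiffAt ℝ n f x) (hmn : m + 1 ≤ n) :
    ContDiffAt ℝ m (grad f) x :=
  contDiffAt_pi.2 fun i => hf.pd i hmn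

theorem ContDiffAt.vlap (hv : ContDiffAt ℝ n v x) (hmn : m + 2 ≤ n) :
    ContDiffAt ℝ m (vlap v) x :=
  contDiffAt_pi.2 fun j => (contDiffAt_pi.1 hv j).lap hmn

theorem divg_congr (h : v =ᶠ[𝓝 x] w) : divg v x = divg w x :=
  Finset.sum_congr rfl fun i _ => pd_congr i (h.mono fun _ hy => congrFun hy i)

theorem divg_zero : divg 0 x = 0 := by
  simp [divg, pd]

theorem divg_add (hv : DifferentiableAt ℝ v x) (hw : DifferentiableAt ℝ w x) :
    divg (v + w) x = divg v x + divg w x := by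
  simp only [divg, Pi.add_apply]
  rw [← Finset.sum_add_distrib]
  exact Finset.sum_congr rfl fun i _ => pd_add i (differentiableAt_pi.1 hv i)
    (differentiableAt_pi.1 hw i)

theorem divg_const_smul (c : ℝ) : divg (c • v) x = c * divg v x := by
  simp only [divg, Pi.smul_apply, smul_eq_mul, pd_const_mul, Finset.mul_sum]

theorem divg_grad : divg (grad f) x = lap f x := rfl

theorem divg_vlap (hv : ContDiffAt ℝ 3 v x) : divg (vlap v) x = lap (divg v) x := by
  have hvj : ∀ j, ContDiffAt ℝ 3 (fun y => v y j) x := contDiffAt_pi.1 hv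
  calc divg (vlap v) x = ∑ j, lap (pd j fun y => v y j) x :=
        Finset.sum_congr rfl fun j _ => pd_lap_comm j (hvj j)
    _ = lap (divg v) x :=
        (lap_sum _ fun j _ => (hvj j).pd j (by norm_num)).symm

end VectorCalculus

theorem div_satisfies_helmholtz_general
    (μ lam Λ : ℝ) (hlam : 0 < lam + 2 * μ)
    (D : Set (Fin 3 → ℝ)) (hD : IsOpen D)
    (u : (Fin 3 → ℝ) → (Fin 3 → ℝ)) (hu : ContDiffOn ℝ 4 u D)
    (heq : ∀ x ∈ D, ∀ j : Fin 3,
      μ * vlap u x j + (lam + μ) * grad (divg u) x j + Λ * u x j = 0) :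
    ∀ x ∈ D, lap (divg u) x + (Λ / (lam + 2 * μ)) * divg u x = 0 := by
  intro x hx
  have hu3 : ContDiffAt ℝ 3 u x := (hu.contDiffAt (hD.mem_nhds hx)).of_le (by norm_num)
  have hvlap : DifferentiableAt ℝ (vlap u) x :=
    (hu3.vlap (m := 1) (by norm_num)).differentiableAt one_ne_zero
  have hgrad : DifferentiableAt ℝ (grad (divg u)) x :=
    ((hu3.divg (m := 2) (by norm_num)).grad (m := 1) (by norm_num)).differentiableAt one_ne_zero
  have hu1 : DifferentiableAt ℝ u x := hu3.differentiableAt (by norm_num)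
  have hzero : μ • vlap u + (lam + μ) • grad (divg u) + Λ • u =ᶠ[𝓝 x] 0 :=
    eventually_of_mem (hD.mem_nhds hx) fun y hy => funext (heq y hy)
  -- taking the divergence of the equation, both second-order terms become `Δ (div u)`
  have hdiv := divg_congr hzero
  rw [divg_zero, divg_add ((hvlap.const_smul μ).add (hgrad.const_smul _)) (hu1.const_smul Λ),
    divg_add (hvlap.const_smul μ) (hgrad.const_smul _), divg_const_smul, divg_const_smul,
    divg_const_smul, divg_vlap hu3, divg_grad] at hdiv
  field_simp
  linarith

/-- If a `C⁴` vector field `u` satisfies the elastic oscillation equation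
`μ Δu + (λ+μ) grad (div u) + Λ u = 0` on an open set `D`, then `div u` satisfies the
Helmholtz equation `Δ(div u) + ω₁ (div u) = 0` on `D`, where `ω₁ = Λ/(λ+2μ)`. -/
theorem div_satisfies_helmholtz
    (μ lam Λ : ℝ) (hμ : 0 < μ) (hlam : 0 < lam + 2 * μ)
    (D : Set (Fin 3 → ℝ)) (hD : IsOpen D)
    (u : (Fin 3 → ℝ) → (Fin 3 → ℝ)) (hu : ContDiffOn ℝ 4 u D)
    (heq : ∀ x ∈ D, ∀ j : Fin 3,
      μ * vlap u x j + (lam + μ) * grad (divg u) x j + Λ * u x j = 0) :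
    ∀ x ∈ D, lap (divg u) x + (Λ / (lam + 2 * μ)) * divg u x = 0 :=
  div_satisfies_helmholtz_general μ lam Λ hlam D hD u hu heq
end
end

section
/- (Abelian theorem: two-term eigenvalue counting asymptotics imply two-term heat trace asymptotics.) Let n ≥ 2 be a natural number, let a, b be real numbers, and let τ : ℕ → ℝ be a monotone nondecreasing sequence of nonnegative real numbers tending to +∞. For Λ ∈ ℝ let N(Λ) denote the number of indices k with τ_k < Λ (a finite number). Assume that N(Λ) − a·Λ^{n/2} − b·Λ^{(n−1)/2} = o(Λ^{(n−1)/2}) as Λ → +∞. Then for every t > 0 the series Σ_k exp(−t·τ_k) converges, and Σ_k exp(−t·τ_k) − Γ(1 + n/2)·a·t^{−n/2} − Γ(1 + (n−1)/2)·b·t^{−(n−1)/2} = o(t^{−(n−1)/2}) as t → 0⁺. -/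
/-!
With `N(λ) = #{k | τ k < λ}` and `e^{-tτₖ} = ∫_{τₖ}^∞ t e^{-tλ} dλ`, Tonelli gives
`∑ₖ e^{-tτₖ} = ∫₀^∞ N(λ) t e^{-tλ} dλ`. Since `∫₀^∞ λ^s t e^{-tλ} dλ = Γ(1 + s) t^{-s}`, the heat
trace minus the two model terms is the same transform of the remainder
`R(λ) = N(λ) - aλ^{n/2} - bλ^{(n-1)/2}`. Cutting at a `Λ` beyond which `|R(λ)| ≤ ε λ^{(n-1)/2}`,
the integral over `(0, Λ]` is `O(t)` and the tail is at most `ε Γ((n+1)/2) t^{-(n-1)/2}`.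
-/

open MeasureTheory Real Asymptotics Filter Set Topology

namespace HeatTrace

variable {t : ℝ} {τ : ℕ → ℝ}

lemma integral_Ioi_mul_exp_neg_mul (ht : 0 < t) (c : ℝ) :
    ∫ x in Ioi c, t * exp (-(t * x)) = exp (-(t * c)) := by
  simp_rw [← neg_mul, integral_const_mul, integral_exp_mul_Ioi (neg_lt_zero.mpr ht)]
  field_simp

lemma integrableOn_rpow_mul_exp_neg_mul {s : ℝ} (hs : -1 < s) (ht : 0 < t) :
    IntegrableOn (fun x => x ^ s * (t * exp (-(t * x)))) (Ioi 0) := by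
  refine IntegrableOn.congr_fun ((integrableOn_rpow_mul_exp_neg_mul_rpow hs one_pos ht).const_mul t)
    (fun x _ => ?_) measurableSet_Ioi
  simp only [rpow_one, neg_mul]
  ring

lemma integral_rpow_mul_exp_neg_mul {s : ℝ} (hs : -1 < s) (ht : 0 < t) :
    ∫ x in Ioi 0, x ^ s * (t * exp (-(t * x))) = Gamma (1 + s) * t ^ (-s) := by
  have h := integral_rpow_mul_exp_neg_mul_Ioi (a := s + 1) (by linarith) ht
  simp only [add_sub_cancel_right] at h
  simp_rw [mul_left_comm _ t, integral_const_mul, h, one_div, inv_rpow ht.le,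
    ← rpow_neg ht.le]
  rw [← mul_assoc, show -s = 1 + -(s + 1) by ring, rpow_add ht, rpow_one, add_comm s]
  ring

lemma finite_setOf_lt (htop : Tendsto τ atTop atTop) (Λ : ℝ) : {k | τ k < Λ}.Finite := by
  simpa [← Nat.cofinite_eq_atTop, not_le] using htop.eventually_ge_atTop Λ

lemma monotone_card_setOf_lt (hfin : ∀ Λ, {k | τ k < Λ}.Finite) :
    Monotone fun Λ => (Nat.card {k | τ k < Λ} : ℝ) := fun _ _ hΛ =>
  Nat.cast_le.mpr <| Nat.card_mono (hfin _) fun _ hk => lt_of_lt_of_le hk hΛ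

lemma tsum_indicator_Ioi_eq_card_mul (hfin : ∀ Λ, {k | τ k < Λ}.Finite) (f : ℝ → ENNReal) (x : ℝ) :
    ∑' k, (Ioi (τ k)).indicator f x = Nat.card {k | τ k < x} * f x := by
  have := (hfin x).to_subtype
  rw [← ENat.toENNReal_coe, ← ENat.card_eq_coe_natCard, ← ENNReal.tsum_const,
    tsum_subtype {k | τ k < x} fun _ => f x]
  rfl

lemma lintegral_card_setOf_lt_mul_exp (hfin : ∀ Λ, {k | τ k < Λ}.Finite) (hpos : ∀ k, 0 ≤ τ k)
    (ht : 0 < t) :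
    ∫⁻ x in Ioi 0, ENNReal.ofReal (Nat.card {k | τ k < x} * (t * exp (-(t * x)))) =
      ∑' k, ENNReal.ofReal (exp (-(t * τ k))) := by
  set w : ℝ → ENNReal := fun x => ENNReal.ofReal (t * exp (-(t * x)))
  have hw : Measurable w := by fun_prop
  calc ∫⁻ x in Ioi 0, ENNReal.ofReal (Nat.card {k | τ k < x} * (t * exp (-(t * x))))
      = ∫⁻ x in Ioi 0, ∑' k, (Ioi (τ k)).indicator w x := by
        congr 1 with x
        rw [tsum_indicator_Ioi_eq_card_mul hfin, ENNReal.ofReal_mul (by positivity),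
          ENNReal.ofReal_natCast]
    _ = ∑' k, ∫⁻ x in Ioi 0, (Ioi (τ k)).indicator w x :=
        lintegral_tsum fun k => (hw.indicator measurableSet_Ioi).aemeasurable
    _ = ∑' k, ENNReal.ofReal (exp (-(t * τ k))) := by
        congr 1 with k
        rw [lintegral_indicator measurableSet_Ioi, Measure.restrict_restrict measurableSet_Ioi,
          inter_eq_self_of_subset_left (Ioi_subset_Ioi (hpos k)),
          ← ofReal_integral_eq_lintegral_ofReal, integral_Ioi_mul_exp_neg_mul ht]
        · simpa only [neg_mul] using (integrableOn_exp_mul_Ioi (neg_lt_zero.mpr ht) _).const_mul t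
        · exact Eventually.of_forall fun x => by positivity

lemma hasSum_exp_neg_mul (hfin : ∀ Λ, {k | τ k < Λ}.Finite) (hpos : ∀ k, 0 ≤ τ k) (ht : 0 < t)
    (hint : IntegrableOn (fun x => (Nat.card {k | τ k < x} : ℝ) * (t * exp (-(t * x)))) (Ioi 0)) :
    HasSum (fun k => exp (-(t * τ k)))
      (∫ x in Ioi 0, (Nat.card {k | τ k < x} : ℝ) * (t * exp (-(t * x)))) := by
  have hlint := (ofReal_integral_eq_lintegral_ofReal hint
    (Eventually.of_forall fun x => by positivity)).trans
      (lintegral_card_setOf_lt_mul_exp hfin hpos ht)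
  have hsum : Summable fun k => exp (-(t * τ k)) := by
    have hne : ∑' k, ENNReal.ofReal (exp (-(t * τ k))) ≠ ⊤ := hlint ▸ ENNReal.ofReal_ne_top
    simpa only [ENNReal.toReal_ofReal, exp_nonneg] using ENNReal.summable_toReal hne
  rw [hsum.hasSum_iff, ← ENNReal.ofReal_eq_ofReal_iff (tsum_nonneg fun k => exp_nonneg _)
    (setIntegral_nonneg measurableSet_Ioi fun x _ => by positivity),
    ENNReal.ofReal_tsum_of_nonneg (fun k => exp_nonneg _) hsum, hlint]

lemma integrableOn_mul_exp_neg_mul_of_isBigO {f : ℝ → ℝ} {s : ℝ} (hs : -1 < s)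
    (hf : LocallyIntegrableOn f (Ici 0)) (hO : f =O[atTop] fun x => x ^ s) (ht : 0 < t) :
    IntegrableOn (fun x => f x * (t * exp (-(t * x)))) (Ioi 0) := by
  have hloc : LocallyIntegrableOn (fun x => f x * (t * exp (-(t * x)))) (Ici 0) :=
    hf.mul_continuousOn (by fun_prop) isClosed_Ici.isLocallyClosed
  exact (hloc.integrableOn_of_isBigO_atTop (hO.mul (isBigO_refl _ _))
    ⟨Ioi 0, Ioi_mem_atTop 0, integrableOn_rpow_mul_exp_neg_mul hs ht⟩).mono_set Ioi_subset_Ici_self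

lemma isLittleO_id_rpow_neg_nhdsGT_zero {s : ℝ} (hs : -1 < s) :
    (fun t : ℝ => t) =o[𝓝[>] 0] fun t => t ^ (-s) := by
  have hlim : Tendsto (fun t : ℝ => t ^ (1 + s)) (𝓝[>] 0) (𝓝 0) := by
    simpa [zero_rpow (by linarith : 1 + s ≠ 0)] using
      (continuousAt_rpow_const 0 (1 + s) (Or.inr (by linarith))).tendsto.mono_left
        nhdsWithin_le_nhds
  refine (((isLittleO_one_iff ℝ).mpr hlim).mul_isBigO (isBigO_refl (fun t => t ^ (-s)) _)).congr'
    ?_ (by simp)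
  filter_upwards [self_mem_nhdsWithin] with t (ht : 0 < t)
  rw [← rpow_add ht, add_neg_cancel_right, rpow_one]

lemma norm_integral_mul_exp_neg_mul_le {R : ℝ → ℝ} {s c Λ : ℝ} (hs : -1 < s) (hc : 0 ≤ c)
    (hR : IntegrableOn R (Ioc 0 Λ)) (hbound : ∀ x, Λ ≤ x → ‖R x‖ ≤ c * ‖x ^ s‖) (ht : 0 < t) :
    ‖∫ x in Ioi 0, R x * (t * exp (-(t * x)))‖ ≤
      t * (∫ x in Ioc 0 Λ, ‖R x‖) + c * (Gamma (1 + s) * t ^ (-s)) := by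
  have hind : IntegrableOn ((Ioc 0 Λ).indicator fun x => t * ‖R x‖) (Ioi 0) :=
    (IntegrableOn.integrable_indicator (hR.norm.const_mul t) measurableSet_Ioc).integrableOn
  have hmodel : IntegrableOn (fun x => c * (x ^ s * (t * exp (-(t * x))))) (Ioi 0) :=
    (integrableOn_rpow_mul_exp_neg_mul hs ht).const_mul c
  calc ‖∫ x in Ioi 0, R x * (t * exp (-(t * x)))‖
      ≤ ∫ x in Ioi 0, ((Ioc 0 Λ).indicator (fun x => t * ‖R x‖) x +
          c * (x ^ s * (t * exp (-(t * x))))) := by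
        refine norm_integral_le_of_norm_le (hind.add hmodel) ?_
        filter_upwards [ae_restrict_mem measurableSet_Ioi] with x (hx : 0 < x)
        have hw : t * exp (-(t * x)) ≤ t := by
          have : exp (-(t * x)) ≤ 1 := exp_le_one_iff.mpr (by nlinarith)
          nlinarith
        have hxs : 0 ≤ x ^ s := rpow_nonneg hx.le s
        rw [norm_mul, Real.norm_of_nonneg (by positivity : 0 ≤ t * exp (-(t * x)))]
        by_cases hxΛ : x ≤ Λ
        · rw [indicator_of_mem (show x ∈ Ioc 0 Λ from ⟨hx, hxΛ⟩)]
          have : 0 ≤ c * (x ^ s * (t * exp (-(t * x)))) := by positivity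
          nlinarith [norm_nonneg (R x)]
        · rw [indicator_of_notMem fun h => hxΛ h.2, zero_add]
          have := hbound x (not_le.mp hxΛ).le
          rw [Real.norm_of_nonneg hxs] at this
          calc ‖R x‖ * (t * exp (-(t * x))) ≤ c * x ^ s * (t * exp (-(t * x))) := by gcongr
            _ = c * (x ^ s * (t * exp (-(t * x)))) := by ring
    _ = t * (∫ x in Ioc 0 Λ, ‖R x‖) + c * (Gamma (1 + s) * t ^ (-s)) := by
        rw [integral_add hind hmodel,
          integral_indicator measurableSet_Ioc, Measure.restrict_restrict measurableSet_Ioc,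
          inter_eq_left.mpr Ioc_subset_Ioi_self, integral_const_mul, integral_const_mul,
          integral_rpow_mul_exp_neg_mul hs ht]

theorem isLittleO_integral_mul_exp_neg_mul {R : ℝ → ℝ} {s : ℝ} (hs : -1 < s)
    (hR : LocallyIntegrableOn R (Ici 0)) (ho : R =o[atTop] fun x => x ^ s) :
    (fun t => ∫ x in Ioi 0, R x * (t * exp (-(t * x)))) =o[𝓝[>] 0] fun t => t ^ (-s) := by
  refine isLittleO_iff.mpr fun ε hε => ?_
  have hΓ : 0 < Gamma (1 + s) := Gamma_pos_of_pos (by linarith)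
  obtain ⟨Λ, hΛ⟩ := eventually_atTop.mp (ho.def (by positivity : 0 < ε / 2 / Gamma (1 + s)))
  have hRΛ : IntegrableOn R (Ioc 0 Λ) :=
    (hR.integrableOn_compact_subset Icc_subset_Ici_self isCompact_Icc).mono_set Ioc_subset_Icc_self
  filter_upwards [((isLittleO_id_rpow_neg_nhdsGT_zero hs).const_mul_left
    (∫ x in Ioc 0 Λ, ‖R x‖)).def (half_pos hε), self_mem_nhdsWithin] with t hsmall (ht : 0 < t)
  calc ‖∫ x in Ioi 0, R x * (t * exp (-(t * x)))‖
      ≤ t * (∫ x in Ioc 0 Λ, ‖R x‖) + ε / 2 / Gamma (1 + s) * (Gamma (1 + s) * t ^ (-s)) :=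
        norm_integral_mul_exp_neg_mul_le hs (by positivity) hRΛ hΛ ht
    _ ≤ ε / 2 * ‖t ^ (-s)‖ + ε / 2 * ‖t ^ (-s)‖ := by
        refine add_le_add ((mul_comm t _).trans_le ((le_norm_self _).trans hsmall)) (le_of_eq ?_)
        rw [Real.norm_of_nonneg (rpow_nonneg ht.le _)]
        field_simp
    _ = ε * ‖t ^ (-s)‖ := by ring

lemma isBigO_rpow_of_isLittleO_sub {f : ℝ → ℝ} {a b s₁ s₂ : ℝ} (hs : s₂ ≤ s₁)
    (h : (fun x => f x - a * x ^ s₁ - b * x ^ s₂) =o[atTop] fun x => x ^ s₂) :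
    f =O[atTop] fun x => x ^ s₁ := by
  have h₂₁ : (fun x : ℝ => x ^ s₂) =O[atTop] fun x => x ^ s₁ := by
    refine IsBigO.of_bound 1 ?_
    filter_upwards [eventually_ge_atTop 1] with x hx
    rw [one_mul, Real.norm_of_nonneg (rpow_nonneg (by linarith) _),
      Real.norm_of_nonneg (rpow_nonneg (by linarith) _)]
    exact rpow_le_rpow_of_exponent_le hx hs
  refine (((h.isBigO.trans h₂₁).add ((isBigO_refl _ _).const_mul_left a)).add
    (h₂₁.const_mul_left b)).congr_left fun x => ?_
  ring

lemma integral_sub_sub_rpow_mul_exp_neg_mul {f : ℝ → ℝ} {a b s₁ s₂ : ℝ} (hs₁ : -1 < s₁)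
    (hs₂ : -1 < s₂) (ht : 0 < t) (hf : IntegrableOn (fun x => f x * (t * exp (-(t * x)))) (Ioi 0)) :
    ∫ x in Ioi 0, (f x - a * x ^ s₁ - b * x ^ s₂) * (t * exp (-(t * x))) =
      (∫ x in Ioi 0, f x * (t * exp (-(t * x)))) - Gamma (1 + s₁) * a * t ^ (-s₁) -
        Gamma (1 + s₂) * b * t ^ (-s₂) := by
  have h₁ := (integrableOn_rpow_mul_exp_neg_mul hs₁ ht).const_mul a
  have h₂ := (integrableOn_rpow_mul_exp_neg_mul hs₂ ht).const_mul b
  have h₀₁ : IntegrableOn (fun x => f x * (t * exp (-(t * x))) -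
      a * (x ^ s₁ * (t * exp (-(t * x))))) (Ioi 0) := hf.sub h₁
  simp_rw [sub_mul, mul_assoc a, mul_assoc b]
  rw [integral_sub h₀₁ h₂, integral_sub hf h₁, integral_const_mul, integral_const_mul,
    integral_rpow_mul_exp_neg_mul hs₁ ht, integral_rpow_mul_exp_neg_mul hs₂ ht]
  ring

end HeatTrace

open HeatTrace in
theorem counting_asymptotics_imply_heat_trace_asymptotics_general
    (n : ℕ) (hn : 2 ≤ n) (a b : ℝ) (τ : ℕ → ℝ)
    (hpos : ∀ k, 0 ≤ τ k)
    (htop : Filter.Tendsto τ Filter.atTop Filter.atTop)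
    (hN : (fun Λ : ℝ =>
        ((Nat.card {k : ℕ | τ k < Λ} : ℝ) - a * Λ ^ ((n : ℝ) / 2)
          - b * Λ ^ (((n : ℝ) - 1) / 2)))
      =o[Filter.atTop] (fun Λ : ℝ => Λ ^ (((n : ℝ) - 1) / 2))) :
    (∀ t : ℝ, 0 < t → Summable (fun k : ℕ => Real.exp (-(t * τ k)))) ∧
    (fun t : ℝ =>
        (∑' k : ℕ, Real.exp (-(t * τ k)))
          - Real.Gamma (1 + (n : ℝ) / 2) * a * t ^ (-(n : ℝ) / 2)
          - Real.Gamma (1 + ((n : ℝ) - 1) / 2) * b * t ^ (-((n : ℝ) - 1) / 2))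
      =o[nhdsWithin 0 (Set.Ioi (0 : ℝ))]
        (fun t : ℝ => t ^ (-((n : ℝ) - 1) / 2)) := by
  have hs₂ : 0 ≤ ((n : ℝ) - 1) / 2 := by
    have : (2 : ℝ) ≤ n := by exact_mod_cast hn
    linarith
  have hs₂₁ : ((n : ℝ) - 1) / 2 ≤ (n : ℝ) / 2 := by linarith
  have hfin := finite_setOf_lt htop
  have hcard : LocallyIntegrableOn (fun x => (Nat.card {k | τ k < x} : ℝ)) (Ici 0) :=
    (monotone_card_setOf_lt hfin).locallyIntegrable.locallyIntegrableOn _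
  have hmodel (c s : ℝ) (hs : 0 ≤ s) : LocallyIntegrableOn (fun x : ℝ => c * x ^ s) (Ici 0) :=
    (continuous_const.mul (continuous_rpow_const hs)).locallyIntegrable.locallyIntegrableOn _
  have hint (t : ℝ) (ht : 0 < t) := integrableOn_mul_exp_neg_mul_of_isBigO (by linarith) hcard
    (isBigO_rpow_of_isLittleO_sub hs₂₁ hN) ht
  have hsum (t : ℝ) (ht : 0 < t) := hasSum_exp_neg_mul hfin hpos ht (hint t ht)
  refine ⟨fun t ht => (hsum t ht).summable, ?_⟩
  have hR : LocallyIntegrableOn (fun x => (Nat.card {k | τ k < x} : ℝ) - a * x ^ ((n : ℝ) / 2)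
      - b * x ^ (((n : ℝ) - 1) / 2)) (Ici 0) :=
    (hcard.sub (hmodel a _ (by linarith))).sub (hmodel b _ hs₂)
  simp only [neg_div]
  refine (isLittleO_integral_mul_exp_neg_mul (by linarith) hR hN).congr' ?_ EventuallyEq.rfl
  filter_upwards [self_mem_nhdsWithin] with t (ht : 0 < t)
  rw [integral_sub_sub_rpow_mul_exp_neg_mul (by linarith) (by linarith) ht (hint t ht),
    (hsum t ht).tsum_eq]

/-- Abelian theorem: a two-term asymptotic expansion of the eigenvalue counting function
`N(Λ) = #{k : τ_k < Λ}` of the form `N(Λ) = aΛ^{n/2} + bΛ^{(n-1)/2} + o(Λ^{(n-1)/2})`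
implies the two-term heat trace expansion
`∑_k e^{-tτ_k} = Γ(1+n/2) a t^{-n/2} + Γ(1+(n-1)/2) b t^{-(n-1)/2} + o(t^{-(n-1)/2})`
as `t → 0⁺`. -/
theorem counting_asymptotics_imply_heat_trace_asymptotics
    (n : ℕ) (hn : 2 ≤ n) (a b : ℝ) (τ : ℕ → ℝ)
    (hmono : Monotone τ) (hpos : ∀ k, 0 ≤ τ k)
    (htop : Filter.Tendsto τ Filter.atTop Filter.atTop)
    (hN : (fun Λ : ℝ =>
        ((Nat.card {k : ℕ | τ k < Λ} : ℝ) - a * Λ ^ ((n : ℝ) / 2)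
          - b * Λ ^ (((n : ℝ) - 1) / 2)))
      =o[Filter.atTop] (fun Λ : ℝ => Λ ^ (((n : ℝ) - 1) / 2))) :
    (∀ t : ℝ, 0 < t → Summable (fun k : ℕ => Real.exp (-(t * τ k)))) ∧
    (fun t : ℝ =>
        (∑' k : ℕ, Real.exp (-(t * τ k)))
          - Real.Gamma (1 + (n : ℝ) / 2) * a * t ^ (-(n : ℝ) / 2)
          - Real.Gamma (1 + ((n : ℝ) - 1) / 2) * b * t ^ (-((n : ℝ) - 1) / 2))
      =o[nhdsWithin 0 (Set.Ioi (0 : ℝ))]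
        (fun t : ℝ => t ^ (-((n : ℝ) - 1) / 2)) :=
  counting_asymptotics_imply_heat_trace_asymptotics_general n hn a b τ hpos htop hN
end

section
/- (Reflection intertwines the planar Lamé operator with its reflected operator.) Let μ, λ be real numbers and let u = (u₁, u₂) : ℝ × ℝ → ℝ × ℝ be twice continuously differentiable. Define the operators L v := −μ·Δv − (λ+μ)·(∂ₓ(∂ₓv₁ + ∂ᵧv₂), ∂ᵧ(∂ₓv₁ + ∂ᵧv₂)) and P⋆v := −μ·Δv − (λ+μ)·(∂ₓₓv₁ − ∂ₓᵧv₂, −∂ₓᵧv₁ + ∂ᵧᵧv₂), where Δ is the componentwise Laplacian. Let w(x, y) := u(x, −y). Then for every (x, y) ∈ ℝ × ℝ, (L w)(x, y) = (P⋆ u)(x, −y). -/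
noncomputable section

/-- Partial derivative in the first coordinate direction of a function on `ℝ × ℝ`. -/
def pdx (f : ℝ × ℝ → ℝ) : ℝ × ℝ → ℝ :=
  fun p => fderiv ℝ f p (1, 0)

/-- Partial derivative in the second coordinate direction of a function on `ℝ × ℝ`. -/
def pdy (f : ℝ × ℝ → ℝ) : ℝ × ℝ → ℝ :=
  fun p => fderiv ℝ f p (0, 1)

/-- Scalar Laplacian on `ℝ × ℝ`. -/
def lap2 (f : ℝ × ℝ → ℝ) : ℝ × ℝ → ℝ :=
  fun p => pdx (pdx f) p + pdy (pdy f) p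

/-- The planar Lamé operator `L v = -μ Δv - (λ+μ) grad (div v)`. -/
def LameOp (μ lam : ℝ) (v : ℝ × ℝ → ℝ × ℝ) : ℝ × ℝ → ℝ × ℝ :=
  fun p =>
    (-μ * lap2 (fun q => (v q).1) p -
        (lam + μ) * pdx (fun q => pdx (fun r => (v r).1) q + pdy (fun r => (v r).2) q) p,
      -μ * lap2 (fun q => (v q).2) p -
        (lam + μ) * pdy (fun q => pdx (fun r => (v r).1) q + pdy (fun r => (v r).2) q) p)

/-- The reflected planar Lamé operator
`P⋆ v = -μ Δv - (λ+μ) (∂ₓₓv₁ - ∂ₓᵧv₂, -∂ₓᵧv₁ + ∂ᵧᵧv₂)`. -/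
def LameOpStar (μ lam : ℝ) (v : ℝ × ℝ → ℝ × ℝ) : ℝ × ℝ → ℝ × ℝ :=
  fun p =>
    (-μ * lap2 (fun q => (v q).1) p -
        (lam + μ) * (pdx (pdx (fun r => (v r).1)) p - pdx (pdy (fun r => (v r).2)) p),
      -μ * lap2 (fun q => (v q).2) p -
        (lam + μ) * (-pdx (pdy (fun r => (v r).1)) p + pdy (pdy (fun r => (v r).2)) p))

/-!
The reflection `σ (x, y) = (x, -y)` is a linear involution, so `∂ₓ (f ∘ σ) = ∂ₓ f ∘ σ` and
`∂ᵧ (f ∘ σ) = -(∂ᵧ f ∘ σ)`. Hence the Laplacian commutes with `σ`, and the divergence of `u ∘ σ` is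
`(∂ₓ u₁ - ∂ᵧ u₂) ∘ σ`. Its gradient is `P⋆`'s correction term once `∂ᵧ∂ₓ u₁ = ∂ₓ∂ᵧ u₁` (Schwarz).
-/

def reflectSnd : (ℝ × ℝ) ≃L[ℝ] ℝ × ℝ :=
  (ContinuousLinearEquiv.refl ℝ ℝ).prodCongr (ContinuousLinearEquiv.neg ℝ)

@[simp]
lemma reflectSnd_apply (p : ℝ × ℝ) : reflectSnd p = (p.1, -p.2) := rfl

lemma pdx_comp_reflectSnd (f : ℝ × ℝ → ℝ) : pdx (f ∘ reflectSnd) = pdx f ∘ reflectSnd := by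
  ext p
  simp only [pdx, reflectSnd.comp_right_fderiv, ContinuousLinearMap.comp_apply,
    ContinuousLinearEquiv.coe_coe, reflectSnd_apply, neg_zero, Function.comp_apply]

lemma pdy_comp_reflectSnd (f : ℝ × ℝ → ℝ) : pdy (f ∘ reflectSnd) = -(pdy f ∘ reflectSnd) := by
  ext p
  have he₂ : reflectSnd (0, 1) = -(0, 1) := by simp
  simp only [pdy, reflectSnd.comp_right_fderiv, ContinuousLinearMap.comp_apply,
    ContinuousLinearEquiv.coe_coe, he₂, map_neg, Pi.neg_apply, Function.comp_apply]

lemma pdy_neg (f : ℝ × ℝ → ℝ) : pdy (-f) = -pdy f := by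
  ext p
  simp only [pdy, fderiv_neg, neg_apply, Pi.neg_apply]

lemma lap2_comp_reflectSnd (f : ℝ × ℝ → ℝ) : lap2 (f ∘ reflectSnd) = lap2 f ∘ reflectSnd := by
  ext p
  simp only [lap2, pdx_comp_reflectSnd, pdy_comp_reflectSnd, pdy_neg, neg_neg, Function.comp_apply]

lemma contDiff_pdx {n : WithTop ℕ∞} {f : ℝ × ℝ → ℝ} (hf : ContDiff ℝ (n + 1) f) :
    ContDiff ℝ n (pdx f) :=
  (hf.fderiv_right le_rfl).clm_apply contDiff_const

lemma contDiff_pdy {n : WithTop ℕ∞} {f : ℝ × ℝ → ℝ} (hf : ContDiff ℝ (n + 1) f) :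
    ContDiff ℝ n (pdy f) :=
  (hf.fderiv_right le_rfl).clm_apply contDiff_const

lemma pdx_sub {f g : ℝ × ℝ → ℝ} {p : ℝ × ℝ} (hf : DifferentiableAt ℝ f p)
    (hg : DifferentiableAt ℝ g p) : pdx (f - g) p = pdx f p - pdx g p := by
  simp only [pdx, fderiv_sub hf hg, sub_apply]

lemma pdy_sub {f g : ℝ × ℝ → ℝ} {p : ℝ × ℝ} (hf : DifferentiableAt ℝ f p)
    (hg : DifferentiableAt ℝ g p) : pdy (f - g) p = pdy f p - pdy g p := by
  simp only [pdy, fderiv_sub hf hg, sub_apply]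

lemma pdy_pdx_eq_pdx_pdy {f : ℝ × ℝ → ℝ} {p : ℝ × ℝ} (hf : ContDiffAt ℝ 2 f p) :
    pdy (pdx f) p = pdx (pdy f) p := by
  have hf' : DifferentiableAt ℝ (fderiv ℝ f) p :=
    (hf.fderiv_right (m := 1) le_rfl).differentiableAt one_ne_zero
  change fderiv ℝ (fun q => fderiv ℝ f q (1, 0)) p (0, 1) =
    fderiv ℝ (fun q => fderiv ℝ f q (0, 1)) p (1, 0)
  rw [fderiv_clm_apply hf' (differentiableAt_const _),
    fderiv_clm_apply hf' (differentiableAt_const _)]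
  simpa using (hf.isSymmSndFDerivAt (by simp)).eq (0, 1) (1, 0)

lemma lameOp_comp_reflectSnd (μ lam : ℝ) {v : ℝ × ℝ → ℝ × ℝ} (hv : ContDiff ℝ 2 v) :
    LameOp μ lam (v ∘ reflectSnd) = LameOpStar μ lam v ∘ reflectSnd := by
  have hv₁ : (fun q => ((v ∘ reflectSnd) q).1) = (fun q => (v q).1) ∘ reflectSnd := rfl
  have hv₂ : (fun q => ((v ∘ reflectSnd) q).2) = (fun q => (v q).2) ∘ reflectSnd := rfl
  have hdiv : (fun q => pdx ((fun r => (v r).1) ∘ reflectSnd) q +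
      pdy ((fun r => (v r).2) ∘ reflectSnd) q) =
      (pdx (fun r => (v r).1) - pdy (fun r => (v r).2)) ∘ reflectSnd := by
    rw [pdx_comp_reflectSnd, pdy_comp_reflectSnd]
    rfl
  have hd₁ : Differentiable ℝ (pdx fun r => (v r).1) :=
    (contDiff_pdx (n := 1) hv.fst).differentiable one_ne_zero
  have hd₂ : Differentiable ℝ (pdy fun r => (v r).2) :=
    (contDiff_pdy (n := 1) hv.snd).differentiable one_ne_zero
  unfold LameOp LameOpStar
  rw [hv₁, hv₂, hdiv, lap2_comp_reflectSnd, lap2_comp_reflectSnd, pdx_comp_reflectSnd,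
    pdy_comp_reflectSnd]
  ext p
  · simp only [Function.comp_apply, pdx_sub (hd₁ _) (hd₂ _)]
  · simp only [Function.comp_apply, Pi.neg_apply, pdy_sub (hd₁ _) (hd₂ _),
      pdy_pdx_eq_pdx_pdy hv.fst.contDiffAt]
    ring

/-- Reflection intertwines the planar Lamé operator with its reflected operator:
for `w(x,y) := u(x,-y)`, one has `(L w)(x,y) = (P⋆ u)(x,-y)`. -/
theorem reflection_intertwines_lame
    (μ lam : ℝ) (u : ℝ × ℝ → ℝ × ℝ) (hu : ContDiff ℝ 2 u)
    (w : ℝ × ℝ → ℝ × ℝ) (hw : w = fun p => u (p.1, -p.2)) :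
    ∀ x y : ℝ, LameOp μ lam w (x, y) = LameOpStar μ lam u (x, -y) := by
  subst hw
  intro x y
  exact congrFun (lameOp_comp_reflectSnd μ lam hu) (x, y)
end
end
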